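/- Let d ≥ 1 and let A be a measurement with n outcomes on ℂ^d. Then A is post-processing maximal (i.e., for every measurement B with any finite number of outcomes, A ⪯ B implies B ⪯ A) if and only if A is rank-1, i.e., every nonzero effect A x has matrix rank equal to 1. -/

import Mathlib

open Matrix
open scoped Kronecker ComplexOrder

noncomputable section

/-- A measurement (POVM): a finite family of positive semidefinite matrices summing to `1`. -/
def IsMeasurement {ι κ : Type*} [Fintype ι] [DecidableEq ι] [Fintype κ]
    (A : κ → Matrix ι ι ℂ) : Prop :=
  (∀ x, (A x).PosSemidef) ∧ ∑ x, A x = 1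

/-- `A` is a post-processing of `B`: `A ⪯ B`. -/
def PostProc {ι : Type*} {n m : ℕ}
    (A : Fin n → Matrix ι ι ℂ) (B : Fin m → Matrix ι ι ℂ) : Prop :=
  ∃ μ : Fin n → Fin m → ℝ,
    (∀ x y, 0 ≤ μ x y) ∧ (∀ y, ∑ x, μ x y = 1) ∧
    (∀ x, A x = ∑ y, (μ x y : ℂ) • B y)

/-- The outer product `|E⟩⟨F|` of the vectorizations of two matrices. -/
def outerProd {ι : Type*} (E F : Matrix ι ι ℂ) : Matrix (ι × ι) (ι × ι) ℂ :=
  Matrix.of fun p q => E p.1 p.2 * star (F q.1 q.2)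

/-- The (un-normalized) Fisher information map of a measurement. -/
noncomputable def Fisher {ι κ : Type*} [Fintype ι] [Fintype κ]
    (A : κ → Matrix ι ι ℂ) : Matrix (ι × ι) (ι × ι) ℂ :=
  ∑ x, (Matrix.trace (A x))⁻¹ • outerProd (A x) (A x)

/-- The positive semidefinite square root of a positive semidefinite matrix
(the former Mathlib `Matrix.PosSemidef.sqrt`). -/
noncomputable def posSemidefSqrt {ι : Type*} [Fintype ι] [DecidableEq ι]
    {A : Matrix ι ι ℂ} (hA : A.PosSemidef) : Matrix ι ι ℂ :=
  hA.1.eigenvectorUnitary.1 * diagonal ((↑) ∘ (√·) ∘ hA.1.eigenvalues) *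
  (star hA.1.eigenvectorUnitary : Matrix ι ι ℂ)

/-- The generalized Fisher information map of a measurement, relative to a
positive definite state `ρ` (with positive semidefinite square root `ρ^{1/2}`). -/
noncomputable def FisherRho {ι κ : Type*} [Fintype ι] [DecidableEq ι] [Fintype κ]
    {ρ : Matrix ι ι ℂ} (hρ : ρ.PosDef) (A : κ → Matrix ι ι ℂ) :
    Matrix (ι × ι) (ι × ι) ℂ :=
  ∑ x, (Matrix.trace (ρ * A x))⁻¹ •
    outerProd (posSemidefSqrt hρ.posSemidef * A x) (posSemidefSqrt hρ.posSemidef * A x)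

/-- The height of a finite family of self-adjoint matrices: the infimum of the traces of
Hermitian matrices dominating every member in the Loewner order. -/
noncomputable def height {ι κ : Type*} [Fintype ι] [Fintype κ]
    (X : κ → Matrix ι ι ℂ) : ℝ :=
  sInf { t : ℝ | ∃ H : Matrix ι ι ℂ, H.IsHermitian ∧
    (∀ i, (H - X i).PosSemidef) ∧ t = (Matrix.trace H).re }

/-! The key fact is that the Loewner interval below a rank-one matrix is a segment: if
`0 ≤ C ≤ w w*`, then `C` vanishes on `w⊥`, whence `‖w‖² C = C w w* = w w* C` and
`‖w‖⁴ C = w w* C w w* = (w* C w) w w*`.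

Every measurement is a post-processing of the rank-one measurement obtained by splitting each
effect into rank-one pieces. If `A` is maximal, some piece `w w*` dominates a positive multiple
of any given effect `A x`, which is then itself rank one. Conversely, if `A` is rank one and
`A x = ∑ y, μ x y B y`, then every `μ x y B y ≤ A x` equals `(μ x y tr B y / tr A x) A x`;
these coefficients (Bayes' rule for `μ`) post-process `A` back into `B`. -/

open scoped MatrixOrder

namespace Matrix

variable {𝕜 n : Type*} [RCLike 𝕜] [Fintype n]

theorem mulVec_eq_zero_of_le {C P : Matrix n n 𝕜} (hC : 0 ≤ C) (hCP : C ≤ P) {u : n → 𝕜}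
    (hu : P *ᵥ u = 0) : C *ᵥ u = 0 := by
  rw [nonneg_iff_posSemidef] at hC
  have hq := (le_iff.1 hCP).dotProduct_mulVec_nonneg u
  rw [sub_mulVec, hu, zero_sub, dotProduct_neg, neg_nonneg] at hq
  exact (hC.dotProduct_mulVec_zero_iff u).1 (le_antisymm hq (hC.dotProduct_mulVec_nonneg u))

theorem exists_eq_smul_vecMulVec_of_le {C : Matrix n n 𝕜} {w : n → 𝕜} (hC : 0 ≤ C)
    (hCw : C ≤ vecMulVec w (star w)) : ∃ t : 𝕜, C = t • vecMulVec w (star w) := by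
  set P := vecMulVec w (star w)
  set s := star w ⬝ᵥ w
  have hPv : ∀ v, P *ᵥ v = (star w ⬝ᵥ v) • w := fun v => by
    rw [vecMulVec_mulVec, op_smul_eq_smul]
  have hCP : s • C = C * P := by
    refine ext_iff_mulVec.2 fun v => ?_
    have hu : P *ᵥ (s • v - (star w ⬝ᵥ v) • w) = 0 := by
      rw [hPv, dotProduct_sub, dotProduct_smul, dotProduct_smul, smul_eq_mul, smul_eq_mul,
        mul_comm, sub_self, zero_smul]
    have := mulVec_eq_zero_of_le hC hCw hu
    rw [mulVec_sub, mulVec_smul, mulVec_smul, sub_eq_zero] at this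
    rw [smul_mulVec, this, ← mulVec_mulVec, hPv, mulVec_smul]
  have hs : star s = s := (star_dotProduct w w).symm
  have hPC : s • C = P * C := by
    have := congrArg conjTranspose hCP
    rwa [conjTranspose_smul, hs, conjTranspose_mul, (nonneg_iff_posSemidef.1 hC).1.eq,
      conjTranspose_vecMulVec, star_star] at this
  have hPCP : P * C * P = (star w ⬝ᵥ C *ᵥ w) • P := by
    rw [vecMulVec_mul, vecMulVec_mul_vecMulVec, ← vecMulVec_smul, ← dotProduct_mulVec]
  by_cases hw : w = 0
  · refine ⟨0, by rw [zero_smul]; exact le_antisymm (by simpa [P, hw] using hCw) hC⟩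
  · have hs0 : s ≠ 0 := fun h => hw (dotProduct_star_self_eq_zero.1 h)
    refine ⟨(star w ⬝ᵥ C *ᵥ w) / (s * s), ?_⟩
    have : (s * s) • C = (star w ⬝ᵥ C *ᵥ w) • P := by
      rw [mul_smul, hCP, ← Matrix.smul_mul, hPC, hPCP]
    rw [div_eq_inv_mul, mul_smul, ← this, inv_smul_smul₀ (mul_ne_zero hs0 hs0)]

theorem PosSemidef.exists_eq_vecMulVec_of_rank_le_one [DecidableEq n] {P : Matrix n n 𝕜}
    (hP : P.PosSemidef) (hr : P.rank ≤ 1) : ∃ w : n → 𝕜, P = vecMulVec w (star w) := by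
  by_cases h0 : P = 0
  · exact ⟨0, by simp [h0]⟩
  set ev := hP.1.eigenvalues
  obtain ⟨i, hi⟩ : ∃ i, ev i ≠ 0 := Function.ne_iff.1 (mt hP.1.eigenvalues_eq_zero_iff.1 h0)
  have hsub : Subsingleton {j // ev j ≠ 0} :=
    Fintype.card_le_one_iff_subsingleton.1 (hP.1.rank_eq_card_non_zero_eigs ▸ hr)
  have hzero : ∀ j ≠ i, ev j = 0 := fun j hj => by
    by_contra h
    exact hj (congrArg Subtype.val (Subsingleton.elim (⟨j, h⟩ : {j // ev j ≠ 0}) ⟨i, hi⟩))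
  set s : n → 𝕜 := Pi.single i (√(ev i) : 𝕜)
  have hD : diagonal (RCLike.ofReal ∘ ev) = vecMulVec s (star s) := by
    ext j k
    by_cases hj : j = i
    · by_cases hk : k = i
      · subst hj hk
        simp only [s, diagonal_apply_eq, Function.comp_apply, vecMulVec_apply, Pi.star_single,
          Pi.single_eq_same, RCLike.star_def, RCLike.conj_ofReal, ← RCLike.ofReal_mul]
        rw [Real.mul_self_sqrt (hP.eigenvalues_nonneg _)]
      · simp [s, vecMulVec_apply, hk, hj, Ne.symm hk]
    · simp [s, vecMulVec_apply, hj, diagonal_apply, hzero j hj]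
  set U := (hP.1.eigenvectorUnitary : Matrix n n 𝕜)
  refine ⟨U *ᵥ s, ?_⟩
  conv_lhs => rw [hP.1.spectral_theorem, Unitary.conjStarAlgAut_apply, hD]
  rw [mul_vecMulVec, vecMulVec_mul, star_mulVec]
  rfl

theorem eq_trace_div_trace_smul_of_le [DecidableEq n] {C P : Matrix n n 𝕜} (hC : 0 ≤ C)
    (hCP : C ≤ P) (hr : P.rank ≤ 1) : C = (C.trace / P.trace) • P := by
  obtain ⟨w, rfl⟩ :=
    PosSemidef.exists_eq_vecMulVec_of_rank_le_one (nonneg_iff_posSemidef.1 (hC.trans hCP)) hr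
  obtain ⟨t, rfl⟩ := exists_eq_smul_vecMulVec_of_le hC hCP
  by_cases hw : vecMulVec w (star w) = 0
  · simp [hw]
  · have htr : (vecMulVec w (star w)).trace ≠ 0 :=
      mt (posSemidef_vecMulVec_self_star w).trace_eq_zero_iff.1 hw
    rw [trace_smul, smul_eq_mul, mul_div_cancel_right₀ _ htr]

theorem rank_pos {K m : Type*} [Field K] {A : Matrix m n K} (h : A ≠ 0) : 0 < A.rank := by
  refine Nat.pos_of_ne_zero fun h0 => h (mulVec_injective ?_)
  rw [rank, Submodule.finrank_eq_zero, LinearMap.range_eq_bot] at h0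
  funext v
  simpa using LinearMap.congr_fun h0 v

theorem smul_le_sum_smul {κ : Type*} [Fintype κ] {B : κ → Matrix n n 𝕜} (hB : ∀ y, 0 ≤ B y)
    {μ : κ → ℝ} (hμ : ∀ y, 0 ≤ μ y) (y : κ) : (μ y : 𝕜) • B y ≤ ∑ y', (μ y' : 𝕜) • B y' :=
  Finset.single_le_sum (f := fun y' => (μ y' : 𝕜) • B y')
    (fun y' _ => smul_nonneg (RCLike.ofReal_nonneg.2 (hμ y')) (hB y')) (Finset.mem_univ y)

theorem PosSemidef.ofReal_re_trace {M : Matrix n n ℂ} (hM : M.PosSemidef) :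
    ((M.trace.re : ℝ) : ℂ) = M.trace :=
  (Complex.eq_re_of_ofReal_le (r := 0) (by rw [Complex.ofReal_zero]; exact hM.trace_nonneg)).symm

end Matrix

theorem postProc_of_eq_sum_fiber {ι : Type*} {n m : ℕ} {A : Fin n → Matrix ι ι ℂ}
    {B : Fin m → Matrix ι ι ℂ} (f : Fin m → Fin n)
    (h : ∀ x, A x = ∑ y, if f y = x then B y else 0) : PostProc A B := by
  refine ⟨fun x y => if f y = x then 1 else 0, fun x y => by positivity, fun y => by simp,
    fun x => ?_⟩
  rw [h x]
  refine Finset.sum_congr rfl fun y _ => ?_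
  by_cases hy : f y = x <;> simp [hy]

variable {ι : Type*} [Fintype ι] [DecidableEq ι]

theorem IsMeasurement.exists_rankOne_refinement {n : ℕ} {A : Fin n → Matrix ι ι ℂ}
    (hA : IsMeasurement A) : ∃ (m : ℕ) (B : Fin m → Matrix ι ι ℂ),
      IsMeasurement B ∧ PostProc A B ∧ ∀ y, ∃ w, B y = vecMulVec w (star w) := by
  choose k v hv using fun x => posSemidef_iff_eq_sum_vecMulVec.1 (hA.1 x)
  let E : (x : Fin n) × Fin (k x) → Matrix ι ι ℂ := fun σ =>
    vecMulVec (v σ.1 σ.2) (star (v σ.1 σ.2))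
  let e : Fin (∑ x, k x) ≃ (x : Fin n) × Fin (k x) := finSigmaFinEquiv.symm
  refine ⟨_, E ∘ e, ⟨fun z => posSemidef_vecMulVec_self_star _, ?_⟩,
    postProc_of_eq_sum_fiber (fun z => (e z).1) fun x => ?_, fun z => ⟨_, rfl⟩⟩
  · rw [← hA.2, Function.comp_def, e.sum_comp E, Fintype.sum_sigma]
    exact Finset.sum_congr rfl fun x _ => (hv x).symm
  · rw [Function.comp_def, e.sum_comp (fun σ => if σ.1 = x then E σ else 0), Fintype.sum_sigma,
      hv x]
    simp [E]

theorem PostProc.rank_le_one_of_eq_vecMulVec {n m : ℕ} {A : Fin n → Matrix ι ι ℂ}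
    {B : Fin m → Matrix ι ι ℂ} (h : PostProc B A) (hA : ∀ x, (A x).PosSemidef)
    (hB : ∀ y, ∃ w, B y = vecMulVec w (star w)) (x : Fin n) : (A x).rank ≤ 1 := by
  obtain ⟨ν, hν0, hν1, hBA⟩ := h
  obtain ⟨y, hy⟩ : ∃ y, ν y x ≠ 0 := by
    by_contra! h0
    simpa [h0] using hν1 x
  obtain ⟨w, hw⟩ := hB y
  have hle : (ν y x : ℂ) • A x ≤ vecMulVec w (star w) :=
    hw ▸ hBA y ▸ smul_le_sum_smul (fun x => nonneg_iff_posSemidef.2 (hA x)) (hν0 y) x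
  obtain ⟨t, ht⟩ := exists_eq_smul_vecMulVec_of_le
    (smul_nonneg (Complex.zero_le_real.2 (hν0 y x)) (nonneg_iff_posSemidef.2 (hA x))) hle
  have hAx : A x = vecMulVec (((ν y x : ℂ)⁻¹ * t) • w) (star w) := by
    rw [smul_vecMulVec, mul_smul, ← ht, inv_smul_smul₀ (Complex.ofReal_ne_zero.2 hy)]
  exact hAx ▸ rank_vecMulVec_le _ _

theorem smul_eq_trace_div_smul_of_eq_sum {κ : Type*} [Fintype κ] {P : Matrix ι ι ℂ}
    {B : κ → Matrix ι ι ℂ} (hB : ∀ y, (B y).PosSemidef) {μ : κ → ℝ} (hμ : ∀ y, 0 ≤ μ y)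
    (hP : P = ∑ y, (μ y : ℂ) • B y) (hr : P.rank ≤ 1) (y : κ) :
    (μ y : ℂ) • B y = ((μ y * (B y).trace.re / P.trace.re : ℝ) : ℂ) • P := by
  have hC := smul_nonneg (Complex.zero_le_real.2 (hμ y)) (nonneg_iff_posSemidef.2 (hB y))
  have hle := hP ▸ smul_le_sum_smul (fun y => nonneg_iff_posSemidef.2 (hB y)) hμ y
  rw [eq_trace_div_trace_smul_of_le hC hle hr, trace_smul, smul_eq_mul]
  push_cast
  rw [(nonneg_iff_posSemidef.1 (hC.trans hle)).ofReal_re_trace, (hB y).ofReal_re_trace]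

theorem PostProc.symm_of_rank_le_one [Nonempty ι] {n m : ℕ} {A : Fin n → Matrix ι ι ℂ}
    {B : Fin m → Matrix ι ι ℂ} (hA : IsMeasurement A) (hB : IsMeasurement B)
    (hA1 : ∀ x, (A x).rank ≤ 1) (h : PostProc A B) : PostProc B A := by
  obtain ⟨μ, hμ0, hμ1, hAB⟩ := h
  have hm : (m : ℝ) ≠ 0 := by
    rintro hm
    obtain rfl : m = 0 := by exact_mod_cast hm
    simpa using hB.2
  have hsum : ∀ x, ∑ y, μ x y * (B y).trace.re = (A x).trace.re := fun x => by
    simp [hAB x, trace_sum, trace_smul]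
  let ν : Fin m → Fin n → ℝ := fun y x =>
    if A x = 0 then (m : ℝ)⁻¹ else μ x y * (B y).trace.re / (A x).trace.re
  have hν : ∀ x y, (ν y x : ℂ) • A x = (μ x y : ℂ) • B y := fun x y => by
    by_cases hx : A x = 0 <;>
      simp [ν, hx, smul_eq_trace_div_smul_of_eq_sum hB.1 (hμ0 x) (hAB x) (hA1 x) y]
  refine ⟨ν, fun y x => ?_, fun x => ?_, fun y => ?_⟩
  · by_cases hx : A x = 0
    · simp [ν, hx]
    · simp only [ν, if_neg hx]
      exact div_nonneg (mul_nonneg (hμ0 x y) (Complex.nonneg_iff.1 (hB.1 y).trace_nonneg).1)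
        (Complex.nonneg_iff.1 (hA.1 x).trace_nonneg).1
  · by_cases hx : A x = 0
    · simp [ν, hx, hm]
    · have htrA : (A x).trace.re ≠ 0 := fun h0 => hx <| (hA.1 x).trace_eq_zero_iff.1 <| by
        rw [← (hA.1 x).ofReal_re_trace, h0, Complex.ofReal_zero]
      simp only [ν, if_neg hx]
      rw [← Finset.sum_div, hsum x, div_self htrA]
  · rw [Finset.sum_congr rfl fun x _ => hν x y, ← Finset.sum_smul]
    have : ∑ x, (μ x y : ℂ) = 1 := by exact_mod_cast hμ1 y
    rw [this, one_smul]

/-- A measurement is post-processing maximal iff it is rank-1. -/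
theorem stmt1 {d n : ℕ} (hd : 1 ≤ d) (A : Fin n → Matrix (Fin d) (Fin d) ℂ)
    (hA : IsMeasurement A) :
    (∀ (m : ℕ) (B : Fin m → Matrix (Fin d) (Fin d) ℂ),
        IsMeasurement B → PostProc A B → PostProc B A) ↔
      (∀ x, A x ≠ 0 → (A x).rank = 1) := by
  constructor
  · intro hmax x hx
    obtain ⟨m, B, hB, hAB, hB1⟩ := hA.exists_rankOne_refinement
    exact le_antisymm ((hmax m B hB hAB).rank_le_one_of_eq_vecMulVec hA.1 hB1 x) (rank_pos hx)
  · intro h1 m B hB hAB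
    have : Nonempty (Fin d) := ⟨⟨0, hd⟩⟩
    refine hAB.symm_of_rank_le_one hA hB fun x => ?_
    by_cases hx : A x = 0
    · simp [hx]
    · exact (h1 x hx).le
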